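/- arXiv:2108.01937 — 5 statements merged into one kernel-verified Lean document; each statement's English description precedes it below -/
import Mathlib

section
/- For every unit spinor φ ∈ Δ = ℂ⁴ (with respect to the standard Hermitian product), there exists a unique vector y ∈ ℝ⁵ such that y·φ = iφ under the Clifford action, and this vector y has norm 1. -/
open Complex Matrix Finset

/-- The explicit matrices giving the Clifford action of the basis vectors e₁,…,e₅ of ℝ⁵ on Δ = ℂ⁴. -/
noncomputable def cl : Fin 5 → Matrix (Fin 4) (Fin 4) ℂ :=
  ![!![0,0,0,I; 0,0,I,0; 0,I,0,0; I,0,0,0],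
    !![0,0,0,-1; 0,0,1,0; 0,-1,0,0; 1,0,0,0],
    !![0,0,-I,0; 0,0,0,I; -I,0,0,0; 0,I,0,0],
    !![0,0,1,0; 0,0,0,1; -1,0,0,0; 0,-1,0,0],
    !![I,0,0,0; 0,I,0,0; 0,0,-I,0; 0,0,0,-I]]

/-- Clifford multiplication of a vector x ∈ ℝ⁵ with a spinor φ ∈ Δ = ℂ⁴. -/
noncomputable def act (x : Fin 5 → ℝ) (φ : Fin 4 → ℂ) : Fin 4 → ℂ :=
  ∑ i, x i • (cl i).mulVec φ

/-- The standard Hermitian product on Δ = ℂ⁴ (antilinear in the first argument). -/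
noncomputable def herm (φ ψ : Fin 4 → ℂ) : ℂ := ∑ i, starRingEnd ℂ (φ i) * ψ i

/-!
Each `eᵢ` acts by a skew-Hermitian matrix and `x·(x·φ) = -|x|² φ`, so `|x·φ|² = |x|² |φ|²`. Hence
`x ↦ x·φ` is injective for `φ ≠ 0`, which gives uniqueness, and `y·φ = iφ` forces `|y| = 1`.
For existence, `yᵢ = Im ⟨φ, eᵢ·φ⟩` satisfies the Fierz-type identity `y·φ = |φ|² iφ`.
-/

open ComplexConjugate

lemma act_apply (x : Fin 5 → ℝ) (φ : Fin 4 → ℂ) (k : Fin 4) :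
    act x φ k = ∑ i, (x i : ℂ) * ∑ j, cl i k j * φ j := by
  simp [act, mulVec, dotProduct]

lemma act_sub (x y : Fin 5 → ℝ) (φ : Fin 4 → ℂ) : act (x - y) φ = act x φ - act y φ := by
  simp only [act, Pi.sub_apply, sub_smul, sum_sub_distrib]

lemma herm_act_left (x : Fin 5 → ℝ) (φ ψ : Fin 4 → ℂ) :
    herm (act x φ) ψ = -herm φ (act x ψ) := by
  simp only [herm, act_apply, cl, Fin.sum_univ_five, Fin.sum_univ_four, of_apply, cons_val',
    cons_val_zero, cons_val_one, Matrix.cons_val, cons_val_fin_one, map_add, map_mul, map_neg,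
    map_zero, map_one, conj_ofReal, conj_I]
  ring

lemma act_act (x : Fin 5 → ℝ) (φ : Fin 4 → ℂ) :
    act x (act x φ) = -((∑ i, x i ^ 2 : ℝ) : ℂ) • φ := by
  ext k
  fin_cases k <;>
  simp only [act_apply, cl, Fin.sum_univ_five, Fin.sum_univ_four, of_apply, cons_val',
    cons_val_zero, cons_val_one, Matrix.cons_val, cons_val_fin_one, Pi.smul_apply, smul_eq_mul,
    ofReal_add, ofReal_pow, Fin.isValue, Fin.zero_eta, Fin.mk_one, Fin.reduceFinMk] <;>
  ring_nf <;> simp only [I_sq] <;> ring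

lemma herm_smul_left (c : ℂ) (φ ψ : Fin 4 → ℂ) : herm (c • φ) ψ = conj c * herm φ ψ := by
  simp only [herm, mul_sum, Pi.smul_apply, smul_eq_mul, map_mul, mul_assoc]

lemma herm_smul_right (c : ℂ) (φ ψ : Fin 4 → ℂ) : herm φ (c • ψ) = c * herm φ ψ := by
  simp only [herm, mul_sum, Pi.smul_apply, smul_eq_mul, mul_left_comm]

lemma herm_zero_left (ψ : Fin 4 → ℂ) : herm 0 ψ = 0 := by
  simp [herm]

lemma herm_I_smul_self (φ : Fin 4 → ℂ) : herm (I • φ) (I • φ) = herm φ φ := by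
  rw [herm_smul_left, herm_smul_right, conj_I, ← mul_assoc, neg_mul, I_mul_I, neg_neg, one_mul]

lemma herm_act_self (x : Fin 5 → ℝ) (φ : Fin 4 → ℂ) :
    herm (act x φ) (act x φ) = (∑ i, x i ^ 2 : ℝ) * herm φ φ := by
  rw [herm_act_left, act_act, herm_smul_right, neg_mul, neg_neg]

lemma eq_of_act_eq {φ : Fin 4 → ℂ} (hφ : herm φ φ ≠ 0) {x y : Fin 5 → ℝ}
    (h : act x φ = act y φ) : x = y := by
  have hsq : ∑ i, (x - y) i ^ 2 = 0 := by
    have := herm_act_self (x - y) φ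
    rw [act_sub, h, sub_self, herm_zero_left, eq_comm, mul_eq_zero] at this
    exact_mod_cast this.resolve_right hφ
  rw [Fintype.sum_eq_zero_iff_of_nonneg fun i => sq_nonneg _] at hsq
  exact sub_eq_zero.mp <| funext fun i => (pow_eq_zero_iff two_ne_zero).mp (congrFun hsq i)

lemma sum_sq_eq_one_of_act_eq_I_smul {φ : Fin 4 → ℂ} (hφ : herm φ φ = 1) {y : Fin 5 → ℝ}
    (hy : act y φ = I • φ) : ∑ i, y i ^ 2 = 1 := by
  have := herm_act_self y φ
  rw [hy, herm_I_smul_self, hφ, mul_one] at this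
  exact_mod_cast this.symm

noncomputable def spinorVector (φ : Fin 4 → ℂ) : Fin 5 → ℝ :=
  fun i => (herm φ ((cl i).mulVec φ)).im

lemma act_spinorVector (φ : Fin 4 → ℂ) : act (spinorVector φ) φ = (herm φ φ * I) • φ := by
  ext k
  fin_cases k <;>
  simp only [act_apply, spinorVector, herm, mulVec, dotProduct, cl, Fin.sum_univ_five,
    Fin.sum_univ_four, of_apply, cons_val', cons_val_zero, cons_val_one, Matrix.cons_val,
    cons_val_fin_one, Pi.smul_apply, smul_eq_mul, Fin.isValue, Fin.zero_eta, Fin.mk_one,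
    Fin.reduceFinMk, Complex.ext_iff, add_re, add_im, mul_re, mul_im, conj_re, conj_im, neg_re,
    neg_im, zero_re, zero_im, one_re, one_im, I_re, I_im, ofReal_re, ofReal_im] <;>
  constructor <;> ring

/-- for every unit spinor φ there is a unique y ∈ ℝ⁵ with y·φ = iφ, and it has norm 1. -/
theorem stmt2 (φ : Fin 4 → ℂ) (hφ : herm φ φ = 1) :
    (∃! y : Fin 5 → ℝ, act y φ = Complex.I • φ) ∧
    (∀ y : Fin 5 → ℝ, act y φ = Complex.I • φ → ∑ i, (y i)^2 = 1) := by
  have hex : act (spinorVector φ) φ = I • φ := by rw [act_spinorVector, hφ, one_mul]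
  refine ⟨⟨spinorVector φ, hex, fun y hy => ?_⟩, fun y => sum_sq_eq_one_of_act_eq_I_smul hφ⟩
  exact eq_of_act_eq (hφ ▸ one_ne_zero) (hy.trans hex.symm)
end

section
/- Let φ ∈ Δ = ℂ⁴ be a unit spinor, y the unique unit vector in ℝ⁵ with y·φ = iφ, and D_φ = {x ∈ ℝ⁵ : ⟨x,y⟩ = 0}. Then V_φ = D_φ·φ = {x·φ : x ∈ D_φ} is a complex subspace of Δ of complex dimension 2. -/
open Complex Matrix Finset

/-!
Clifford multiplication by `x` squares to `-|x|²`, and multiplications by orthogonal vectors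
anticommute. Hence for `x ⊥ y` the spinor `x · φ` lies in the `-i`-eigenspace `V` of
multiplication by `y`, and `x ↦ x · φ` is injective since `x · (x · φ) = -|x|² φ`; so the real
4-dimensional hyperplane `y^⊥` embeds in `V`, giving `dim_ℂ V ≥ 2`. Conversely, any nonzero
`x ⊥ y` maps `V` injectively into the `+i`-eigenspace, which meets `V` trivially, so
`2 dim_ℂ V ≤ 4`. The two bounds force `V = y^⊥ · φ` and `dim_ℂ V = 2`.
-/

open Module

theorem Matrix.mul_fin_four {α : Type*} [AddCommMonoid α] [Mul α]
    (a₁₁ a₁₂ a₁₃ a₁₄ a₂₁ a₂₂ a₂₃ a₂₄ a₃₁ a₃₂ a₃₃ a₃₄ a₄₁ a₄₂ a₄₃ a₄₄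
     b₁₁ b₁₂ b₁₃ b₁₄ b₂₁ b₂₂ b₂₃ b₂₄ b₃₁ b₃₂ b₃₃ b₃₄ b₄₁ b₄₂ b₄₃ b₄₄ : α) :
    !![a₁₁, a₁₂, a₁₃, a₁₄; a₂₁, a₂₂, a₂₃, a₂₄; a₃₁, a₃₂, a₃₃, a₃₄; a₄₁, a₄₂, a₄₃, a₄₄] *
    !![b₁₁, b₁₂, b₁₃, b₁₄; b₂₁, b₂₂, b₂₃, b₂₄; b₃₁, b₃₂, b₃₃, b₃₄; b₄₁, b₄₂, b₄₃, b₄₄] =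
    !![a₁₁*b₁₁ + a₁₂*b₂₁ + a₁₃*b₃₁ + a₁₄*b₄₁, a₁₁*b₁₂ + a₁₂*b₂₂ + a₁₃*b₃₂ + a₁₄*b₄₂,
       a₁₁*b₁₃ + a₁₂*b₂₃ + a₁₃*b₃₃ + a₁₄*b₄₃, a₁₁*b₁₄ + a₁₂*b₂₄ + a₁₃*b₃₄ + a₁₄*b₄₄;
       a₂₁*b₁₁ + a₂₂*b₂₁ + a₂₃*b₃₁ + a₂₄*b₄₁, a₂₁*b₁₂ + a₂₂*b₂₂ + a₂₃*b₃₂ + a₂₄*b₄₂,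
       a₂₁*b₁₃ + a₂₂*b₂₃ + a₂₃*b₃₃ + a₂₄*b₄₃, a₂₁*b₁₄ + a₂₂*b₂₄ + a₂₃*b₃₄ + a₂₄*b₄₄;
       a₃₁*b₁₁ + a₃₂*b₂₁ + a₃₃*b₃₁ + a₃₄*b₄₁, a₃₁*b₁₂ + a₃₂*b₂₂ + a₃₃*b₃₂ + a₃₄*b₄₂,
       a₃₁*b₁₃ + a₃₂*b₂₃ + a₃₃*b₃₃ + a₃₄*b₄₃, a₃₁*b₁₄ + a₃₂*b₂₄ + a₃₃*b₃₄ + a₃₄*b₄₄;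
       a₄₁*b₁₁ + a₄₂*b₂₁ + a₄₃*b₃₁ + a₄₄*b₄₁, a₄₁*b₁₂ + a₄₂*b₂₂ + a₄₃*b₃₂ + a₄₄*b₄₂,
       a₄₁*b₁₃ + a₄₂*b₂₃ + a₄₃*b₃₃ + a₄₄*b₄₃, a₄₁*b₁₄ + a₄₂*b₂₄ + a₄₃*b₃₄ + a₄₄*b₄₄] :=
  (Matrix.mulᵣ_eq _ _).symm

theorem Fintype.linearCombination_mul_add_mul {ι R A : Type*} [Fintype ι] [DecidableEq ι]
    [CommSemiring R] [Semiring A] [Algebra R A] (v : ι → A) (c : A)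
    (hv : ∀ i j, v i * v j + v j * v i = if i = j then c else 0) (x z : ι → R) :
    Fintype.linearCombination R v x * Fintype.linearCombination R v z +
      Fintype.linearCombination R v z * Fintype.linearCombination R v x = (x ⬝ᵥ z) • c := by
  simp only [Fintype.linearCombination_apply, Finset.sum_mul_sum, smul_mul_smul_comm]
  rw [Finset.sum_comm (s := Finset.univ) (t := Finset.univ) (f := fun i j => (z i * x j) • _),
    ← Finset.sum_add_distrib]
  simp_rw [← Finset.sum_add_distrib, mul_comm (z _), ← smul_add, hv, smul_ite, smul_zero,
    Finset.sum_ite_eq, Finset.mem_univ, if_true, dotProduct, Finset.sum_smul]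

theorem Module.Dual.finrank_le_finrank_ker_add_one {K V : Type*} [Field K] [AddCommGroup V]
    [Module K V] [FiniteDimensional K V] (f : Module.Dual K V) :
    finrank K V ≤ finrank K (LinearMap.ker f) + 1 := by
  have hrange := Submodule.finrank_le (LinearMap.range f)
  rw [finrank_self] at hrange
  have := LinearMap.finrank_range_add_finrank_ker f
  omega

theorem le_finrank_ker_dotProductBilin_flip {K : Type*} [Field K] {n : ℕ} (y : Fin (n + 1) → K) :
    n ≤ finrank K (LinearMap.ker ((dotProductBilin K K).flip y)) := by
  simpa using Module.Dual.finrank_le_finrank_ker_add_one ((dotProductBilin K K).flip y)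

theorem Submodule.restrictScalars_eq_of_le_of_finrank_le {k K E : Type*} [Field k] [Field K]
    [Algebra k K] [FiniteDimensional k K] [AddCommGroup E] [Module K E] [Module k E]
    [IsScalarTower k K E] [FiniteDimensional K E] {S : Submodule k E} {W : Submodule K E} {n : ℕ}
    (hSW : S ≤ W.restrictScalars k) (hS : finrank k K * n ≤ finrank k S)
    (hW : finrank K W ≤ n) :
    W.restrictScalars k = S ∧ finrank K W = n := by
  have : FiniteDimensional k E := .trans k K E
  have hWk : finrank k (W.restrictScalars k) = finrank k K * finrank K W :=
    (finrank_mul_finrank k K W).symm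
  have hWn : finrank K W = n := le_antisymm hW <|
    Nat.le_of_mul_le_mul_left (hS.trans ((Submodule.finrank_mono hSW).trans hWk.le)) finrank_pos
  refine ⟨(Submodule.eq_of_le_of_finrank_le hSW ?_).symm, hWn⟩
  rw [hWk, hWn]
  exact hS

namespace Module.End

variable {K V : Type*} [Field K] [AddCommGroup V] [Module K V] {f g : End K V}

theorem apply_mem_eigenspace_neg_of_anticomm (hfg : f * g = -(g * f)) {μ : K} {v : V}
    (hv : v ∈ f.eigenspace μ) : g v ∈ f.eigenspace (-μ) := by
  rw [mem_eigenspace_iff] at hv ⊢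
  have := congr($hfg v)
  simp only [mul_apply, LinearMap.neg_apply, hv, map_smul] at this
  rw [this, neg_smul]

theorem finrank_eigenspace_le_of_anticomm [FiniteDimensional K V] (hg : Function.Injective g)
    (hfg : f * g = -(g * f)) (μ : K) :
    finrank K (f.eigenspace μ) ≤ finrank K (f.eigenspace (-μ)) :=
  LinearMap.finrank_le_finrank_of_injective (f := g.restrict fun _ ↦
    apply_mem_eigenspace_neg_of_anticomm hfg) fun _ _ h ↦ Subtype.ext (hg congr($h.1))

theorem two_mul_finrank_eigenspace_le_of_anticomm [FiniteDimensional K V] [NeZero (2 : K)]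
    (hg : Function.Injective g) (hfg : f * g = -(g * f)) {μ : K} (hμ : μ ≠ 0) :
    2 * finrank K (f.eigenspace μ) ≤ finrank K V := by
  have hdisj : Disjoint (f.eigenspace μ) (f.eigenspace (-μ)) :=
    f.eigenspaces_iSupIndep.pairwiseDisjoint fun h ↦
      hμ <| (mul_eq_zero.mp (by linear_combination h : (2 : K) * μ = 0)).resolve_left two_ne_zero
  have := Submodule.finrank_add_finrank_le_of_disjoint hdisj
  have := finrank_eigenspace_le_of_anticomm hg hfg μ
  omega

end Module.End

lemma cl_mul_add_mul (i j : Fin 5) :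
    cl i * cl j + cl j * cl i = if i = j then -2 else 0 := by
  fin_cases i <;> fin_cases j <;> norm_num [cl, Matrix.mul_fin_four] <;>
    ext a b <;> fin_cases a <;> fin_cases b <;> simp [Matrix.ofNat_apply]

noncomputable def cliff : (Fin 5 → ℝ) →ₗ[ℝ] Matrix (Fin 4) (Fin 4) ℂ :=
  Fintype.linearCombination ℝ cl

noncomputable def actLin (φ : Fin 4 → ℂ) : (Fin 5 → ℝ) →ₗ[ℝ] Fin 4 → ℂ :=
  Fintype.linearCombination ℝ fun i ↦ cl i *ᵥ φ

lemma actLin_apply (φ : Fin 4 → ℂ) (x : Fin 5 → ℝ) : actLin φ x = act x φ := rfl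

lemma act_eq_cliff_mulVec (x : Fin 5 → ℝ) (φ : Fin 4 → ℂ) : act x φ = cliff x *ᵥ φ := by
  simp [act, cliff, Fintype.linearCombination_apply, sum_mulVec, smul_mulVec]

lemma cliff_mul_add_mul (x z : Fin 5 → ℝ) :
    cliff x * cliff z + cliff z * cliff x = (x ⬝ᵥ z) • (-2) :=
  Fintype.linearCombination_mul_add_mul cl _ cl_mul_add_mul x z

lemma cliff_mul_self (x : Fin 5 → ℝ) : cliff x * cliff x = -(x ⬝ᵥ x) • 1 := by
  have h : (2 : ℝ) • (cliff x * cliff x) = (2 : ℝ) • (-(x ⬝ᵥ x) • 1) := by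
    rw [two_smul, cliff_mul_add_mul, show (-2 : Matrix (Fin 4) (Fin 4) ℂ) = (-2 : ℝ) • 1 by
      rw [neg_smul, two_smul, one_add_one_eq_two]]
    module
  exact smul_right_injective _ two_ne_zero h

lemma cliff_mulVec_eq_zero_iff {x : Fin 5 → ℝ} {φ : Fin 4 → ℂ} :
    cliff x *ᵥ φ = 0 ↔ x = 0 ∨ φ = 0 := by
  refine ⟨fun h ↦ ?_, by rintro (rfl | rfl) <;> simp⟩
  have hsq : (-(x ⬝ᵥ x)) • φ = 0 := by
    rw [← one_mulVec φ, ← smul_mulVec, ← cliff_mul_self, ← mulVec_mulVec, h, mulVec_zero]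
  simpa [dotProduct_self_eq_zero] using hsq

lemma actLin_injective {φ : Fin 4 → ℂ} (hφ : φ ≠ 0) : Function.Injective (actLin φ) :=
  (injective_iff_map_eq_zero _).2 fun x hx ↦ by
    rw [actLin_apply, act_eq_cliff_mulVec, cliff_mulVec_eq_zero_iff] at hx
    exact hx.resolve_right hφ

lemma toLin'_cliff_injective {x : Fin 5 → ℝ} (hx : x ≠ 0) :
    Function.Injective (toLin' (cliff x)) :=
  (injective_iff_map_eq_zero _).2 fun φ hφ ↦ by
    rw [toLin'_apply, cliff_mulVec_eq_zero_iff] at hφ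
    exact hφ.resolve_left hx

lemma toLin'_cliff_anticomm {x z : Fin 5 → ℝ} (h : x ⬝ᵥ z = 0) :
    toLin' (cliff x) * toLin' (cliff z) = -(toLin' (cliff z) * toLin' (cliff x)) := by
  have : cliff x * cliff z = -(cliff z * cliff x) :=
    eq_neg_of_add_eq_zero_left (by rw [cliff_mul_add_mul, h, zero_smul])
  rw [Module.End.mul_eq_comp, Module.End.mul_eq_comp, ← toLin'_mul, ← toLin'_mul, ← map_neg, this]

lemma finrank_eigenspace_cliff_le (y : Fin 5 → ℝ) {μ : ℂ} (hμ : μ ≠ 0) :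
    finrank ℂ (Module.End.eigenspace (toLin' (cliff y)) μ) ≤ 2 := by
  let D := LinearMap.ker ((dotProductBilin ℝ ℝ).flip y)
  have hD : 4 ≤ finrank ℝ D := le_finrank_ker_dotProductBilin_flip y
  obtain ⟨x, hxy, hx0⟩ :=
    Submodule.exists_mem_ne_zero_of_ne_bot (p := D) (Submodule.finrank_eq_zero.not.mp (by omega))
  have := Module.End.two_mul_finrank_eigenspace_le_of_anticomm (toLin'_cliff_injective hx0)
    (toLin'_cliff_anticomm ((dotProduct_comm _ _).trans hxy)) hμ
  rw [finrank_fin_fun] at this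
  omega

lemma act_mem_eigenspace_cliff {φ : Fin 4 → ℂ} {x y : Fin 5 → ℝ} (hy : act y φ = I • φ)
    (hxy : x ⬝ᵥ y = 0) : act x φ ∈ Module.End.eigenspace (toLin' (cliff y)) (-I) := by
  rw [act_eq_cliff_mulVec, ← toLin'_apply] at hy ⊢
  exact Module.End.apply_mem_eigenspace_neg_of_anticomm
    (toLin'_cliff_anticomm ((dotProduct_comm _ _).trans hxy)) (Module.End.mem_eigenspace_iff.2 hy)

theorem stmt4_general (φ : Fin 4 → ℂ) (hφ : herm φ φ = 1) (y : Fin 5 → ℝ)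
    (hy : act y φ = Complex.I • φ) :
    ∃ V : Submodule ℂ (Fin 4 → ℂ),
      (V : Set (Fin 4 → ℂ)) = {ψ | ∃ x : Fin 5 → ℝ, (∑ i, x i * y i = 0) ∧ act x φ = ψ} ∧
      Module.finrank ℂ V = 2 := by
  have hφ0 : φ ≠ 0 := by rintro rfl; simp [herm] at hφ
  let D := LinearMap.ker ((dotProductBilin ℝ ℝ).flip y)
  let V := Module.End.eigenspace (toLin' (cliff y)) (-I)
  have hDV : D.map (actLin φ) ≤ V.restrictScalars ℝ := by
    rintro _ ⟨x, hx, rfl⟩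
    exact act_mem_eigenspace_cliff hy hx
  have hD : finrank ℝ ℂ * 2 ≤ finrank ℝ (D.map (actLin φ)) := by
    rw [Complex.finrank_real_complex,
      ← (Submodule.equivMapOfInjective _ (actLin_injective hφ0) D).finrank_eq]
    have := le_finrank_ker_dotProductBilin_flip y
    omega
  obtain ⟨hVD, hV⟩ := Submodule.restrictScalars_eq_of_le_of_finrank_le hDV hD
    (finrank_eigenspace_cliff_le y (neg_ne_zero.2 I_ne_zero))
  refine ⟨V, ?_, hV⟩
  rw [← Submodule.coe_restrictScalars ℝ, hVD]
  ext ψ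
  simp [actLin_apply, D, dotProduct]

/-- V_φ = D_φ·φ is a complex subspace of Δ of complex dimension 2. -/
theorem stmt4 (φ : Fin 4 → ℂ) (hφ : herm φ φ = 1) (y : Fin 5 → ℝ)
    (hy : act y φ = Complex.I • φ) (hyn : ∑ i, (y i)^2 = 1) :
    ∃ V : Submodule ℂ (Fin 4 → ℂ),
      (V : Set (Fin 4 → ℂ)) = {ψ | ∃ x : Fin 5 → ℝ, (∑ i, x i * y i = 0) ∧ act x φ = ψ} ∧
      Module.finrank ℂ V = 2 :=
  stmt4_general φ hφ y hy
end

section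
/- For φ = s₁ ∈ ℂ⁴, the map sending a 2-form ω to ω·φ restricts to a real-linear isomorphism from the 10-dimensional space Λ²(ℝ⁵) modulo its 3-dimensional annihilator span{e₁₂-e₃₄, e₁₃+e₂₄, e₁₄-e₂₃} onto the 7-dimensional real orthogonal complement of φ in ℂ⁴ ≅ ℝ⁸; equivalently, {ω·s₁ : ω ∈ Λ²ℝ⁵} = {ψ ∈ ℂ⁴ : Re(ψ, s₁) = 0}. -/
open Complex Matrix Finset

/-- Action of a 2-form Σ_{j<k} a_{jk} e_j∧e_k on a spinor. -/
noncomputable def act2 (a : Fin 5 → Fin 5 → ℝ) (φ : Fin 4 → ℂ) : Fin 4 → ℂ :=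
  ∑ j, ∑ k, if j < k then a j k • (cl j).mulVec ((cl k).mulVec φ) else 0

lemma act2_s1 (a : Fin 5 → Fin 5 → ℝ) :
    act2 a ![1,0,0,0] = ![(a 0 1 + a 2 3) * I, (a 0 2 - a 1 3) + (-(a 0 3) - a 1 2) * I,
      a 2 4 + (-(a 3 4)) * I, -(a 0 4) + a 1 4 * I] := by
  funext i
  simp [act2, Fin.sum_univ_five, cl, mulVec, dotProduct, Fin.sum_univ_four]
  fin_cases i <;> simp <;> ring

/-- {ω·s₁ : ω ∈ Λ²ℝ⁵} = {ψ ∈ ℂ⁴ : Re(ψ,s₁) = 0}. -/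
theorem stmt8 (ψ : Fin 4 → ℂ) :
    (∃ a : Fin 5 → Fin 5 → ℝ, act2 a ![1,0,0,0] = ψ) ↔ (herm ψ ![1,0,0,0]).re = 0 := by
  constructor
  · rintro ⟨a, rfl⟩
    rw [act2_s1]
    simp [herm, Fin.sum_univ_four]
  · intro h
    have h0 : (ψ 0).re = 0 := by
      simpa [herm, Fin.sum_univ_four] using h
    refine ⟨![![0, (ψ 0).im, (ψ 1).re, -(ψ 1).im, -(ψ 3).re],
      ![0, 0, 0, 0, (ψ 3).im],
      ![0, 0, 0, 0, (ψ 2).re],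
      ![0, 0, 0, 0, -(ψ 2).im], ![0,0,0,0,0]], ?_⟩
    rw [act2_s1]
    funext i
    fin_cases i <;> simp <;> apply Complex.ext <;> simp [h0, Matrix.vecHead, Matrix.vecTail]
end

section
/- Fix the unit spinor φ = a s₁ + b i s₁ + c s₂ + d i s₂ ∈ ℂ⁴ with a²+b²+c²+d² = 1, and let D = span_ℝ{e₁,e₂,e₃,e₄}. Define J^φ : D → D by J^φ(x)·φ = i(x·φ). Then J^φ is well-defined, ℝ-linear, and satisfies (J^φ)² = -id_D; moreover its matrix in the basis (e₁,e₂,e₃,e₄) is the skew-symmetric matrix with (1,2)-entry α, (1,3)-entry -β, (1,4)-entry -γ, (2,3)-entry -γ, (2,4)-entry β, (3,4)-entry α, where α = a²+b²-c²-d², β = 2(ad-bc), γ = 2(ac+bd). -/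
open Complex Matrix Finset

/-- Inclusion of D = span{e₁,e₂,e₃,e₄} into ℝ⁵. -/
def pad (x : Fin 4 → ℝ) : Fin 5 → ℝ := ![x 0, x 1, x 2, x 3, 0]

set_option maxHeartbeats 4000000 in
/-- for the unit spinor φ = a s₁ + b i s₁ + c s₂ + d i s₂, the map
J^φ : D → D defined by J^φ(x)·φ = i(x·φ) is given by the explicit skew-symmetric matrix
with α = a²+b²-c²-d², β = 2(ad-bc), γ = 2(ac+bd), and squares to -id. -/
theorem stmt12 (a b c d : ℝ) (h : a^2+b^2+c^2+d^2 = 1) :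
    let φ : Fin 4 → ℂ := ![(a:ℂ) + b*Complex.I, (c:ℂ) + d*Complex.I, 0, 0]
    let α : ℝ := a^2+b^2-c^2-d^2
    let β : ℝ := 2*(a*d-b*c)
    let γ : ℝ := 2*(a*c+b*d)
    let J : Matrix (Fin 4) (Fin 4) ℝ := !![0,α,-β,-γ; -α,0,-γ,β; β,γ,0,α; γ,-β,-α,0]
    J * J = -1 ∧ ∀ x : Fin 4 → ℝ, act (pad (J.mulVec x)) φ = Complex.I • act (pad x) φ := by
  intro φ α β γ J
  constructor
  · ext i j
    fin_cases i <;> fin_cases j <;>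
      simp [J, α, β, γ, Matrix.mul_apply, Fin.sum_univ_four, Matrix.one_apply] <;> nlinarith [h, sq_nonneg (a*b), sq_nonneg (c*d)]
  · intro x
    funext i
    have S : ∀ i, act (pad (J.mulVec x)) φ i = Complex.I * act (pad x) φ i → act (pad (J.mulVec x)) φ i = Complex.I • act (pad x) φ i := fun i hh => hh
    fin_cases i <;>
      simp only [act, pad, J, α, β, γ, cl, φ, Matrix.mulVec, dotProduct, Fin.sum_univ_five,
        Fin.sum_univ_four, Pi.smul_apply, smul_eq_mul, Matrix.cons_val_zero, Matrix.cons_val_one,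
        Matrix.head_cons, Matrix.cons_val', Matrix.cons_val_fin_one, Matrix.empty_val',
        Matrix.head_fin_const, Fin.isValue, Matrix.cons_mulVec, Matrix.cons_val_succ,
        Matrix.cons_val_two, Matrix.cons_val_three, Matrix.tail_cons, Finset.sum_apply,
        Pi.add_apply, Pi.mul_apply] <;>
      simp [Complex.ext_iff, ← Complex.ofReal_pow]
    · constructor
      · linear_combination (d*x 1 - c*x 0 + b*x 3 + a*x 2) * h
      · linear_combination (-d*x 0 - c*x 1 + b*x 2 - a*x 3) * h
    · constructor
      · linear_combination (d*x 3 - c*x 2 - b*x 1 - a*x 0) * h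
      · linear_combination (-d*x 2 - c*x 3 - b*x 0 + a*x 1) * h
end

section
/- Let V = span_ℂ{s₃,s₄} ⊂ ℂ⁴ and V⊥ = span_ℂ{s₁,s₂}. Then for every unit spinor ψ ∈ V, V⊥ = span_ℂ{s₁,s₂} equals {x·ψ : x ∈ span_ℝ{e₁,e₂,e₃,e₄}}. -/
open Complex Matrix Finset

/-- for any unit spinor ψ ∈ V = span_ℂ{s₃,s₄}, the set
{x·ψ : x ∈ span_ℝ{e₁,e₂,e₃,e₄}} is exactly V⊥ = span_ℂ{s₁,s₂}. -/
theorem stmt17 (ψ : Fin 4 → ℂ) (h0 : ψ 0 = 0) (h1 : ψ 1 = 0) (hψ : herm ψ ψ = 1) :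
    ∀ χ : Fin 4 → ℂ,
      (∃ x : Fin 5 → ℝ, x 4 = 0 ∧ act x ψ = χ) ↔ (χ 2 = 0 ∧ χ 3 = 0) := by
  intro χ
  have hn : (ψ 2).re^2 + (ψ 2).im^2 + (ψ 3).re^2 + (ψ 3).im^2 = 1 := by
    have := congrArg Complex.re hψ
    simp [herm, Fin.sum_univ_four, h0, h1, Complex.mul_re] at this
    nlinarith [this]
  constructor
  · rintro ⟨x, hx4, rfl⟩
    constructor <;>
    · simp [act, cl, Fin.sum_univ_five, mulVec, dotProduct, Fin.sum_univ_four, h0, h1, hx4,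
        Matrix.vecHead, Matrix.vecTail]
  · rintro ⟨hc2, hc3⟩
    set a := ψ 2 with ha
    set b := ψ 3 with hb
    set α : ℂ := starRingEnd ℂ a * χ 1 - b * starRingEnd ℂ (χ 0) with hα
    set β : ℂ := starRingEnd ℂ b * χ 1 + a * starRingEnd ℂ (χ 0) with hβ
    refine ⟨![α.im, α.re, β.im, β.re, 0], rfl, ?_⟩
    have key : ∀ j : Fin 4, act ![α.im, α.re, β.im, β.re, 0] ψ j = χ j := by
      intro j
      have e0 : act ![α.im, α.re, β.im, β.re, 0] ψ j
          = ((α.im : ℂ) • ((cl 0).mulVec ψ) + (α.re : ℂ) • ((cl 1).mulVec ψ)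
            + (β.im : ℂ) • ((cl 2).mulVec ψ) + (β.re : ℂ) • ((cl 3).mulVec ψ)) j := by
        simp [act, Fin.sum_univ_five, Complex.real_smul]
      rw [e0]
      fin_cases j <;>
        simp only [cl, mulVec, dotProduct, Fin.sum_univ_four, h0, h1, ← ha, ← hb,
          Matrix.cons_val_zero, Matrix.cons_val_one, Matrix.head_cons,
          Matrix.cons_val_two, Matrix.cons_val_three, Matrix.tail_cons,
          Matrix.cons_val', Matrix.empty_val', Matrix.cons_val_fin_one,
          Matrix.vecHead, Matrix.vecTail, Pi.add_apply, Pi.smul_apply, smul_eq_mul,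
          Function.comp_apply, Fin.isValue]
      · -- entry 0 : should equal χ 0
        rw [hc2, hc3] at *
        rw [Complex.ext_iff]
        constructor <;>
          (simp [hα, hβ, Complex.mul_re, Complex.mul_im]; ring_nf)
        · linear_combination (χ 0).re * hn
        · linear_combination (χ 0).im * hn
      · rw [Complex.ext_iff]
        constructor <;>
          (simp [hα, hβ, Complex.mul_re, Complex.mul_im]; ring_nf)
        · linear_combination (χ 1).re * hn
        · linear_combination (χ 1).im * hn
      · show _ = χ 2
        rw [hc2]
        simp [cl, Matrix.vecHead, Matrix.vecTail]
      · show _ = χ 3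
        rw [hc3]
        simp [cl, Matrix.vecHead, Matrix.vecTail]
    funext j; exact key j
end
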